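/- arXiv:1811.02720 — 8 statements merged into one kernel-verified Lean document; each statement's English description precedes it below -/
import Mathlib

section
/- Let q, N, m be nonnegative integers and n a nonnegative integer. Then ∫₀¹ R_{N,n}(x) R_{N,m}(x) x^{2q+1} dx = δ_{n,m} / (2(2n + N + q + 1)), where δ_{n,m} = 1 if n = m and 0 otherwise. (This is the orthogonality relation for radial Zernike polynomials in dimension p+2 with p = 2q.) -/
open Finset intervalIntegral

/-- The radial Zernike polynomial `R_{N,n}` in dimension `p + 2` with `p = 2q`. -/
noncomputable def zernikeR (q N n : ℕ) (x : ℝ) : ℝ :=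
  x ^ N * ∑ k ∈ Finset.range (n + 1),
    (-1 : ℝ) ^ k * (Nat.choose (n + N + q) k : ℝ) * (Nat.choose n k : ℝ) *
      x ^ (2 * (n - k)) * (1 - x ^ 2) ^ k

/-!
Substituting `t = x²` gives `R_{N,n}(x) = x^N P_n(t)`, where `P_n` is the shifted Jacobi
polynomial orthogonal for the weight `t^a` on `[0, 1]`, `a = N + q`, and the integral becomes
`½ ∫₀¹ t^a P_n P_m dt`. By Rodrigues' formula `n! t^a P_n = (d/dt)^n [t^(n+a) (t-1)^n]`, and the
bracket vanishes to order `n` at both ends, so `n` integrations by parts move all derivatives onto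
the other factor. This kills every polynomial of degree `< n`; for `m = n` only the leading
coefficient `C(2n+a, n)` of `P_n` survives, against the Beta integral `∫₀¹ t^(n+a) (1-t)^n dt`.
-/

open Polynomial

section CommRing

variable {R : Type*} [CommRing R]

theorem iterate_derivative_eq_C_of_natDegree_le {p : R[X]} {n : ℕ} (hp : p.natDegree ≤ n) :
    derivative^[n] p = C (n.factorial * p.coeff n) := by
  have hdeg : (derivative^[n] p).natDegree ≤ 0 :=
    (natDegree_iterate_derivative p n).trans (by omega)
  rw [eq_C_of_natDegree_le_zero hdeg, coeff_iterate_derivative, zero_add, Nat.descFactorial_self,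
    nsmul_eq_mul]

/-- `shiftedJacobi R a n` evaluated at `t` is the Jacobi polynomial `P_n^{(0,a)}(2t - 1)`. -/
noncomputable def shiftedJacobi (R : Type*) [CommRing R] (a n : ℕ) : R[X] :=
  ∑ k ∈ range (n + 1), C ((n + a).choose k * n.choose k : R) * X ^ (n - k) * (X - C 1) ^ k

theorem natDegree_shiftedJacobi_le (a n : ℕ) : (shiftedJacobi R a n).natDegree ≤ n := by
  refine natDegree_sum_le_of_forall_le _ _ fun k hk => ?_
  have hkn : k ≤ n := Nat.lt_succ_iff.mp (mem_range.mp hk)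
  rw [mul_assoc]
  refine (natDegree_C_mul_le _ _).trans <| natDegree_mul_le.trans ?_
  have hX := natDegree_X_pow_le (R := R) (n - k)
  have hXsub : ((X - C (1 : R)) ^ k).natDegree ≤ k * 1 :=
    natDegree_pow_le_of_le k (natDegree_X_sub_C_le (1 : R))
  omega

theorem coeff_shiftedJacobi_self (a n : ℕ) :
    (shiftedJacobi R a n).coeff n = (2 * n + a).choose n := by
  have hterm : ∀ k ∈ range (n + 1),
      (C ((n + a).choose k * n.choose k : R) * X ^ (n - k) * (X - C 1) ^ k).coeff n
        = (((n + a).choose k * n.choose (n - k) : ℕ) : R) := by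
    intro k hk
    have hkn : k ≤ n := Nat.lt_succ_iff.mp (mem_range.mp hk)
    have hlead : ((X - C (1 : R)) ^ k).coeff k = 1 := by
      simpa [coeff_one] using coeff_pow_of_natDegree_le (m := k) (natDegree_X_sub_C_le (1 : R))
    rw [mul_assoc, coeff_C_mul, coeff_X_pow_mul', if_pos (Nat.sub_le n k), Nat.sub_sub_self hkn,
      hlead, mul_one, Nat.choose_symm hkn, Nat.cast_mul]
  rw [shiftedJacobi, finsetSum_coeff, sum_congr rfl hterm, two_mul, add_right_comm,
    Nat.add_choose_eq, Nat.sum_antidiagonal_eq_sum_range_succ_mk]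
  push_cast
  rfl

theorem iterate_derivative_X_pow_mul_X_sub_C_one_pow (a n : ℕ) :
    derivative^[n] (X ^ (n + a) * (X - C 1) ^ n : R[X])
      = C (n.factorial : R) * (X ^ a * shiftedJacobi R a n) := by
  rw [mul_comm, iterate_derivative_mul, shiftedJacobi, mul_sum, mul_sum]
  refine sum_congr rfl fun k hk => ?_
  have hkn : k ≤ n := Nat.lt_succ_iff.mp (mem_range.mp hk)
  have hcoeff : n.choose k * (n.descFactorial (n - k) * (n + a).descFactorial k)
      = n.factorial * ((n + a).choose k * n.choose k) := by
    rw [Nat.descFactorial_eq_factorial_mul_choose, Nat.descFactorial_eq_factorial_mul_choose,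
      Nat.choose_symm hkn, ← Nat.choose_mul_factorial_mul_factorial hkn]
    ring
  have hcoeff' := congrArg (Nat.cast : ℕ → R[X]) hcoeff
  push_cast at hcoeff'
  rw [iterate_derivative_X_sub_pow, iterate_derivative_X_pow_eq_C_mul, Nat.sub_sub_self hkn,
    show n + a - k = a + (n - k) by omega, pow_add]
  simp only [nsmul_eq_mul, map_mul, map_natCast]
  linear_combination (X ^ a * X ^ (n - k) * (X - C 1) ^ k) * hcoeff'

end CommRing

theorem integral_pow_mul_one_sub_pow (a b : ℕ) :
    ∫ x in (0:ℝ)..1, x ^ a * (1 - x) ^ b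
      = a.factorial * b.factorial / (a + b + 1).factorial := by
  have hB : Complex.betaIntegral (a + 1) (b + 1)
      = ((∫ x in (0:ℝ)..1, x ^ a * (1 - x) ^ b : ℝ) : ℂ) := by
    rw [← integral_ofReal, Complex.betaIntegral]
    simp only [add_sub_cancel_right, Complex.cpow_natCast]
    push_cast
    rfl
  have hΓ := Complex.Gamma_mul_Gamma_eq_betaIntegral (s := a + 1) (t := b + 1)
    (by simp; positivity) (by simp; positivity)
  rw [hB, show (a + 1 + (b + 1) : ℂ) = ((a + b + 1 : ℕ) : ℂ) + 1 by push_cast; ring] at hΓ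
  simp only [Complex.Gamma_nat_eq_factorial] at hΓ
  rw [eq_div_iff (by positivity)]
  exact_mod_cast (by linear_combination -hΓ :
    ((∫ x in (0:ℝ)..1, x ^ a * (1 - x) ^ b : ℝ) : ℂ) * (a + b + 1).factorial
      = a.factorial * b.factorial)

theorem integral_derivative_mul_eq_neg {f : ℝ[X]} {a b : ℝ} (ha : f.IsRoot a) (hb : f.IsRoot b)
    (g : ℝ[X]) :
    ∫ x in a..b, (derivative f).eval x * g.eval x
      = -∫ x in a..b, f.eval x * (derivative g).eval x := by
  have h := integral_deriv_mul_eq_sub (a := a) (b := b)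
    (fun x _ => f.hasDerivAt x) (fun x _ => g.hasDerivAt x)
    ((derivative f).continuous.intervalIntegrable a b)
    ((derivative g).continuous.intervalIntegrable a b)
  rw [integral_add ((by fun_prop : Continuous _).intervalIntegrable _ _)
    ((by fun_prop : Continuous _).intervalIntegrable _ _), ha.eq_zero, hb.eq_zero] at h
  linarith

theorem integral_iterate_derivative_mul_eq {f : ℝ[X]} {a b : ℝ} {n : ℕ}
    (ha : (X - C a) ^ n ∣ f) (hb : (X - C b) ^ n ∣ f) (g : ℝ[X]) :
    ∫ x in a..b, (derivative^[n] f).eval x * g.eval x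
      = (-1) ^ n * ∫ x in a..b, f.eval x * (derivative^[n] g).eval x := by
  induction n generalizing g with
  | zero => simp
  | succ n ih =>
    have hroot : ∀ c : ℝ, (X - C c) ^ (n + 1) ∣ f → (derivative^[n] f).IsRoot c :=
      fun c hc => dvd_iff_isRoot.mp <| by simpa using pow_sub_dvd_iterate_derivative_of_pow_dvd n hc
    rw [Function.iterate_succ_apply', integral_derivative_mul_eq_neg (hroot a ha) (hroot b hb),
      ih (dvd_trans (pow_dvd_pow _ n.le_succ) ha) (dvd_trans (pow_dvd_pow _ n.le_succ) hb),
      ← Function.iterate_succ_apply, pow_succ]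
    ring

theorem integral_comp_sq_mul {g : ℝ → ℝ} (hg : Continuous g) (a b : ℝ) :
    ∫ x in a..b, g (x ^ 2) * x = 1 / 2 * ∫ t in a ^ 2..b ^ 2, g t := by
  rw [← integral_comp_mul_deriv (fun x _ => hasDerivAt_pow 2 x) (by fun_prop) hg,
    ← integral_const_mul]
  refine integral_congr fun x _ => ?_
  simp only [Function.comp_apply]
  ring

theorem integral_pow_mul_shiftedJacobi_mul (a n : ℕ) (p : ℝ[X]) :
    ∫ t in (0:ℝ)..1, t ^ a * (shiftedJacobi ℝ a n).eval t * p.eval t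
      = (-1) ^ n / n.factorial *
        ∫ t in (0:ℝ)..1, t ^ (n + a) * (t - 1) ^ n * (derivative^[n] p).eval t := by
  have hW0 : (X - C 0) ^ n ∣ (X ^ (n + a) * (X - C 1) ^ n : ℝ[X]) := by
    rw [C_0, sub_zero]
    exact (pow_dvd_pow X (n.le_add_right a)).mul_right _
  have hW1 : (X - C 1) ^ n ∣ (X ^ (n + a) * (X - C 1) ^ n : ℝ[X]) := dvd_mul_left _ _
  have hfac : (n.factorial : ℝ) ≠ 0 := by positivity
  have hparts := integral_iterate_derivative_mul_eq hW0 hW1 p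
  simp only [iterate_derivative_X_pow_mul_X_sub_C_one_pow, eval_mul, eval_C, eval_pow, eval_X,
    eval_sub] at hparts
  simp only [mul_assoc, integral_const_mul] at hparts ⊢
  rw [← mul_div_right_comm, eq_div_iff hfac, mul_comm, hparts]

theorem integral_pow_mul_shiftedJacobi_mul_eq_zero {a n : ℕ} {p : ℝ[X]} (hp : p.natDegree < n) :
    ∫ t in (0:ℝ)..1, t ^ a * (shiftedJacobi ℝ a n).eval t * p.eval t = 0 := by
  simp [integral_pow_mul_shiftedJacobi_mul, iterate_derivative_eq_zero hp]

theorem integral_pow_mul_shiftedJacobi_mul_self (a n : ℕ) :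
    ∫ t in (0:ℝ)..1, t ^ a * (shiftedJacobi ℝ a n).eval t * (shiftedJacobi ℝ a n).eval t
      = 1 / (2 * n + a + 1) := by
  rw [integral_pow_mul_shiftedJacobi_mul,
    iterate_derivative_eq_C_of_natDegree_le (natDegree_shiftedJacobi_le a n),
    coeff_shiftedJacobi_self]
  have hchoose : ((2 * n + a).choose n : ℝ) * n.factorial * (n + a).factorial
      = (2 * n + a).factorial := by
    have h := Nat.choose_mul_factorial_mul_factorial (show n ≤ 2 * n + a by omega)
    rw [show 2 * n + a - n = n + a by omega] at h
    exact_mod_cast h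
  have hchoose_ne : ((2 * n + a).choose n : ℝ) ≠ 0 :=
    Nat.cast_ne_zero.mpr (Nat.choose_pos (by omega)).ne'
  simp only [eval_C]
  calc (-1) ^ n / n.factorial *
        ∫ t in (0:ℝ)..1, t ^ (n + a) * (t - 1) ^ n * (n.factorial * (2 * n + a).choose n)
      = (2 * n + a).choose n * ∫ t in (0:ℝ)..1, t ^ (n + a) * (1 - t) ^ n := by
        rw [← integral_const_mul, ← integral_const_mul]
        refine integral_congr fun t _ => ?_
        rw [show (1 - t) ^ n = (-1) ^ n * (t - 1) ^ n by rw [← mul_pow]; ring]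
        field_simp
    _ = 1 / (2 * n + a + 1) := by
        rw [integral_pow_mul_one_sub_pow, show n + a + n + 1 = 2 * n + a + 1 by omega,
          Nat.factorial_succ]
        push_cast
        rw [← hchoose]
        field_simp

theorem integral_pow_mul_shiftedJacobi_mul_shiftedJacobi (a n m : ℕ) :
    ∫ t in (0:ℝ)..1, t ^ a * (shiftedJacobi ℝ a n).eval t * (shiftedJacobi ℝ a m).eval t
      = if n = m then 1 / (2 * (n : ℝ) + a + 1) else 0 := by
  rcases lt_trichotomy n m with h | rfl | h
  · rw [if_neg h.ne]
    calc _ = ∫ t in (0:ℝ)..1,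
            t ^ a * (shiftedJacobi ℝ a m).eval t * (shiftedJacobi ℝ a n).eval t :=
          integral_congr fun t _ => by ring
      _ = 0 :=
          integral_pow_mul_shiftedJacobi_mul_eq_zero ((natDegree_shiftedJacobi_le a n).trans_lt h)
  · rw [if_pos rfl, integral_pow_mul_shiftedJacobi_mul_self]
  · rw [if_neg h.ne', integral_pow_mul_shiftedJacobi_mul_eq_zero
      ((natDegree_shiftedJacobi_le a m).trans_lt h)]

theorem zernikeR_eq_mul_shiftedJacobi (q N n : ℕ) (x : ℝ) :
    zernikeR q N n x = x ^ N * (shiftedJacobi ℝ (N + q) n).eval (x ^ 2) := by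
  simp only [zernikeR, shiftedJacobi, eval_finsetSum, eval_mul, eval_C, eval_pow, eval_X, eval_sub]
  congr 1
  refine sum_congr rfl fun k _ => ?_
  have hsign : (x ^ 2 - 1) ^ k = (-1) ^ k * (1 - x ^ 2) ^ k := by rw [← mul_pow]; ring
  rw [show n + N + q = n + (N + q) by omega, pow_mul, hsign]
  ring

theorem zernike_radial_orthogonality (q N n m : ℕ) :
    ∫ x in (0:ℝ)..1, zernikeR q N n x * zernikeR q N m x * x ^ (2 * q + 1)
      = (if n = m then (1:ℝ) else 0) / (2 * (2 * n + N + q + 1)) := by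
  set P : ℕ → ℝ[X] := shiftedJacobi ℝ (N + q)
  calc ∫ x in (0:ℝ)..1, zernikeR q N n x * zernikeR q N m x * x ^ (2 * q + 1)
      = ∫ x in (0:ℝ)..1, (x ^ 2) ^ (N + q) * (P n).eval (x ^ 2) * (P m).eval (x ^ 2) * x :=
        integral_congr fun x _ => by
          simp only [zernikeR_eq_mul_shiftedJacobi, P]
          ring
    _ = 1 / 2 * ∫ t in (0:ℝ)..1, t ^ (N + q) * (P n).eval t * (P m).eval t := by
        simpa using integral_comp_sq_mul
          (g := fun t => t ^ (N + q) * (P n).eval t * (P m).eval t) (by fun_prop) 0 1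
    _ = _ := by
        rw [integral_pow_mul_shiftedJacobi_mul_shiftedJacobi]
        split_ifs <;> push_cast <;> field_simp <;> ring
end

section
/- Let q and N be nonnegative integers and n a positive integer. Then for all x ∈ [0,1], 2(n+1)(n+N+q+1)(2n+N+q) · R_{N,n+1}(x) = −( (2n+N+q+1)(N+q)² + (2n+N+q)(2n+N+q+1)(2n+N+q+2)(1−2x²) ) · R_{N,n}(x) − 2n(n+N+q)(2n+N+q+2) · R_{N,n−1}(x). -/
/-!
With `t = x²` and `u = t - 1` one has `(-1)^k t^(n-k) (1-t)^k = u^k (1+u)^(n-k)`, and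
Chu–Vandermonde turns `R_{N,n}(x) / x^N` into `∑ₘ C(n,m) C(a+n+m,m) uᵐ` with `a = N + q`,
i.e. the Jacobi polynomial `P_n^{(0,a)}(2x² - 1)`. The claim is the three-term recurrence of
these Jacobi polynomials; comparing coefficients of `uᵐ⁺¹`, it becomes a rational identity once
the binomials are written through ratios of neighbouring ones.
-/

open Finset

open Polynomial

theorem sum_range_choose_mul_choose_mul_choose_sub (a n m : ℕ) :
    ∑ k ∈ range (m + 1), (n + a).choose k * n.choose k * (n - k).choose (m - k)
      = n.choose m * (a + n + m).choose m := by
  have hvandermonde :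
      ∑ k ∈ range (m + 1), (n + a).choose k * m.choose k = (a + n + m).choose m := by
    rw [show a + n + m = n + a + m by ring, Nat.add_choose_eq,
      Nat.sum_antidiagonal_eq_sum_range_succ_mk]
    refine sum_congr rfl fun k hk => ?_
    rw [Nat.choose_symm (Nat.le_of_lt_succ (mem_range.mp hk))]
  rw [← hvandermonde, mul_sum]
  refine sum_congr rfl fun k hk => ?_
  rw [mul_assoc, ← Nat.choose_mul (Nat.le_of_lt_succ (mem_range.mp hk))]
  ring

def jacobiCoeff (a n m : ℕ) : ℕ := n.choose m * (a + n + m).choose m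

theorem jacobiCoeff_eq_zero_of_lt {a n m : ℕ} (h : n < m) : jacobiCoeff a n m = 0 := by
  simp [jacobiCoeff, Nat.choose_eq_zero_of_lt h]

theorem jacobiCoeff_zero_right (a n : ℕ) : jacobiCoeff a n 0 = 1 := by
  simp [jacobiCoeff]

/-- `P_n^{(0,a)}(1 + 2X)`, the Jacobi polynomial in the variable `u = (z - 1) / 2`. -/
noncomputable def jacobiShift (R : Type*) [CommRing R] (a n : ℕ) : R[X] :=
  ∑ m ∈ range (n + 1), C (jacobiCoeff a n m : R) * X ^ m

section CommRing

variable {R : Type*} [CommRing R]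

theorem coeff_jacobiShift (a n m : ℕ) : (jacobiShift R a n).coeff m = jacobiCoeff a n m := by
  simp only [jacobiShift, finsetSum_coeff, coeff_C_mul_X_pow, sum_ite_eq, mem_range]
  split_ifs with h
  · rfl
  · rw [jacobiCoeff_eq_zero_of_lt (by omega), Nat.cast_zero]

theorem jacobiShift_eq_sum_X_pow_mul_one_add_X_pow (a n : ℕ) :
    jacobiShift R a n = ∑ k ∈ range (n + 1),
      C (((n + a).choose k * n.choose k : ℕ) : R) * (X ^ k * (1 + X) ^ (n - k)) := by
  ext m
  simp only [coeff_jacobiShift, finsetSum_coeff, coeff_C_mul, coeff_X_pow_mul',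
    coeff_one_add_X_pow, mul_ite, mul_zero, ← sum_filter]
  rw [jacobiCoeff, ← sum_range_choose_mul_choose_mul_choose_sub]
  push_cast
  refine (sum_subset (fun k hk => ?_) fun k hk hk' => ?_).symm
  · simp only [mem_filter, mem_range] at hk ⊢
    omega
  · simp only [mem_filter, mem_range, not_and, not_le] at hk hk'
    rw [Nat.choose_eq_zero_of_lt (by omega : n < k)]
    simp

end CommRing

section Field

variable {K : Type*} [Field K] [CharZero K]

theorem cast_choose_succ_succ (n k : ℕ) :
    ((n + 1).choose (k + 1) : K) = (n + 1) * n.choose k / (k + 1) := by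
  rw [eq_div_iff (Nat.cast_add_one_ne_zero k)]
  exact_mod_cast (Nat.add_one_mul_choose_eq n k).symm

theorem cast_choose_succ_right (n k : ℕ) :
    (n.choose (k + 1) : K) = n.choose k * (n - k) / (k + 1) := by
  rw [eq_div_iff (Nat.cast_add_one_ne_zero k)]
  rcases le_or_gt k n with h | h
  · rw [← Nat.cast_sub h]
    exact_mod_cast Nat.choose_succ_right_eq n k
  · simp [Nat.choose_eq_zero_of_lt h, Nat.choose_eq_zero_of_lt (h.trans (Nat.lt_succ_self k))]

theorem cast_choose_eq_succ_choose (n k : ℕ) :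
    (n.choose k : K) = (n + 1).choose k * (n + 1 - k) / (n + 1) := by
  rw [eq_div_iff (Nat.cast_add_one_ne_zero n)]
  rcases le_or_gt k (n + 1) with h | h
  · rw [← Nat.cast_add_one, ← Nat.cast_sub h]
    exact_mod_cast Nat.choose_mul_succ_eq n k
  · simp [Nat.choose_eq_zero_of_lt h, Nat.choose_eq_zero_of_lt (Nat.lt_of_succ_lt h)]

theorem cast_jacobiCoeff_succ_right (a n m : ℕ) :
    (jacobiCoeff a n (m + 1) : K)
      = jacobiCoeff a n m * ((n - m) * (a + n + m + 1)) / (m + 1) ^ 2 := by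
  simp only [jacobiCoeff, Nat.cast_mul]
  rw [show a + n + (m + 1) = a + n + m + 1 by ring, cast_choose_succ_right n m,
    cast_choose_succ_succ (a + n + m) m]
  push_cast
  field_simp

theorem cast_jacobiCoeff_succ_succ (a n m : ℕ) :
    (jacobiCoeff a (n + 1) (m + 1) : K)
      = jacobiCoeff a n m * ((n + 1) * (a + n + m + 1) * (a + n + m + 2))
        / ((m + 1) ^ 2 * (a + n + 1)) := by
  have han : (a + n + 1 : K) ≠ 0 := by exact_mod_cast Nat.succ_ne_zero (a + n)
  have hanm : (a + n + m + 1 : K) ≠ 0 := by exact_mod_cast Nat.succ_ne_zero (a + n + m)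
  simp only [jacobiCoeff, Nat.cast_mul]
  rw [show a + (n + 1) + (m + 1) = a + n + m + 1 + 1 by ring, cast_choose_succ_succ n m,
    cast_choose_succ_succ (a + n + m + 1) m, cast_choose_eq_succ_choose (a + n + m) m]
  push_cast
  field_simp
  ring

theorem cast_jacobiCoeff_succ_right_eq_succ (a n m : ℕ) :
    (jacobiCoeff a n (m + 1) : K)
      = jacobiCoeff a (n + 1) m * ((n + 1 - m) * (n - m) * (a + n + 1))
        / ((m + 1) ^ 2 * (n + 1)) := by
  simp only [jacobiCoeff, Nat.cast_mul]
  rw [show a + n + (m + 1) = a + (n + 1) + m by ring, cast_choose_succ_right n m,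
    cast_choose_succ_right (a + (n + 1) + m) m, cast_choose_eq_succ_choose n m]
  push_cast
  field_simp
  ring

theorem cast_jacobiCoeff_recurrence (a n m : ℕ) :
    (2 * (n + 2) * (a + n + 2) * (2 * n + a + 2) : K) * jacobiCoeff a (n + 2) (m + 1)
      - (2 * n + a + 3) * ((2 * n + a + 2) * (2 * n + a + 4) - a ^ 2)
          * jacobiCoeff a (n + 1) (m + 1)
      + 2 * (n + 1) * (a + n + 1) * (2 * n + a + 4) * jacobiCoeff a n (m + 1)
      = 2 * (2 * n + a + 2) * (2 * n + a + 3) * (2 * n + a + 4) * jacobiCoeff a (n + 1) m := by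
  have han : (a + (n + 1) + 1 : K) ≠ 0 := by exact_mod_cast Nat.succ_ne_zero (a + (n + 1))
  rw [cast_jacobiCoeff_succ_succ a (n + 1) m, cast_jacobiCoeff_succ_right a (n + 1) m,
    cast_jacobiCoeff_succ_right_eq_succ a n m]
  push_cast
  field_simp
  ring

theorem jacobiShift_recurrence (a n : ℕ) :
    C (2 * (n + 2) * (a + n + 2) * (2 * n + a + 2) : K) * jacobiShift K a (n + 2)
      = C ((2 * n + a + 3) * ((2 * n + a + 2) * (2 * n + a + 4) - a ^ 2) : K)
          * jacobiShift K a (n + 1)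
        + C (2 * (2 * n + a + 2) * (2 * n + a + 3) * (2 * n + a + 4) : K)
          * (X * jacobiShift K a (n + 1))
        - C (2 * (n + 1) * (a + n + 1) * (2 * n + a + 4) : K) * jacobiShift K a n := by
  ext m
  simp only [coeff_add, coeff_sub, coeff_C_mul]
  cases m with
  | zero =>
    simp only [coeff_jacobiShift, jacobiCoeff_zero_right, Nat.cast_one, coeff_X_mul_zero]
    ring
  | succ m =>
    simp only [coeff_jacobiShift, coeff_X_mul]
    linear_combination cast_jacobiCoeff_recurrence (K := K) a n m

end Field

theorem zernikeR_eq_mul_eval_jacobiShift (q N n : ℕ) (x : ℝ) :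
    zernikeR q N n x = x ^ N * (jacobiShift ℝ (N + q) n).eval (x ^ 2 - 1) := by
  rw [zernikeR, jacobiShift_eq_sum_X_pow_mul_one_add_X_pow, eval_finsetSum]
  congr 1
  refine sum_congr rfl fun k _ => ?_
  have hsign : (-1 : ℝ) ^ k * (1 - x ^ 2) ^ k = (x ^ 2 - 1) ^ k := by rw [← mul_pow]; ring
  simp only [eval_C, eval_mul, eval_pow, eval_X, eval_add, eval_one, Nat.cast_mul]
  rw [show n + N + q = n + (N + q) by ring, pow_mul]
  linear_combination ((n + (N + q)).choose k * n.choose k * (x ^ 2) ^ (n - k) : ℝ) * hsign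

theorem zernike_radial_recurrence_general (q N n : ℕ) (hn : 1 ≤ n)
    (x : ℝ) :
    2 * (n + 1) * (n + N + q + 1) * (2 * n + N + q) * zernikeR q N (n + 1) x
      = -(((2 * n + N + q + 1) * ((N : ℝ) + q) ^ 2
            + (2 * n + N + q) * (2 * n + N + q + 1) * (2 * n + N + q + 2)
              * (1 - 2 * x ^ 2)) * zernikeR q N n x)
        - 2 * n * (n + N + q) * (2 * n + N + q + 2) * zernikeR q N (n - 1) x := by
  obtain ⟨p, rfl⟩ : ∃ p, n = p + 1 := ⟨n - 1, by omega⟩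
  have key := congrArg (eval (x ^ 2 - 1)) (jacobiShift_recurrence (K := ℝ) (N + q) p)
  simp only [eval_mul, eval_add, eval_sub, eval_C, eval_X] at key
  simp only [zernikeR_eq_mul_eval_jacobiShift, Nat.add_sub_cancel]
  push_cast at key ⊢
  linear_combination x ^ N * key

theorem zernike_radial_recurrence (q N n : ℕ) (hn : 1 ≤ n)
    (x : ℝ) (hx : x ∈ Set.Icc (0:ℝ) 1) :
    2 * (n + 1) * (n + N + q + 1) * (2 * n + N + q) * zernikeR q N (n + 1) x
      = -(((2 * n + N + q + 1) * ((N : ℝ) + q) ^ 2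
            + (2 * n + N + q) * (2 * n + N + q + 1) * (2 * n + N + q + 2)
              * (1 - 2 * x ^ 2)) * zernikeR q N n x)
        - 2 * n * (n + N + q) * (2 * n + N + q + 2) * zernikeR q N (n - 1) x :=
  zernike_radial_recurrence_general q N n hn x
end

section
/- Let q, N, n be nonnegative integers. Then for all x ∈ [0,1], (2n+N+q+2) · x · R_{N+1,n}(x) = (n+N+q+1) · R_{N,n}(x) + (n+1) · R_{N,n+1}(x). -/
open Finset

lemma coeff_id (M n j : ℕ) :
    ((M:ℝ) + n + 2) * ((M+1).choose (j+1) : ℝ) * (n.choose (j+1) : ℝ)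
      + ((M:ℝ) + 1) * (M.choose j : ℝ) * (n.choose j : ℝ)
    = ((M:ℝ) + 1) * (M.choose (j+1) : ℝ) * (n.choose (j+1) : ℝ)
      + ((n:ℝ) + 1) * ((M+1).choose (j+1) : ℝ) * ((n+1).choose (j+1) : ℝ) := by
  have h1 : (((M+1).choose (j+1) : ℝ)) = (M.choose j : ℝ) + (M.choose (j+1) : ℝ) := by
    exact_mod_cast congrArg (Nat.cast : ℕ → ℝ) (Nat.choose_succ_succ M j)
  have h2 : (((n+1).choose (j+1) : ℝ)) = (n.choose j : ℝ) + (n.choose (j+1) : ℝ) := by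
    exact_mod_cast congrArg (Nat.cast : ℕ → ℝ) (Nat.choose_succ_succ n j)
  have h3 : ((M:ℝ)+1) * (M.choose j : ℝ) = ((j:ℝ)+1) * ((M+1).choose (j+1) : ℝ) := by
    have h := Nat.add_one_mul_choose_eq M j
    have h' : ((Nat.succ M * M.choose j : ℕ) : ℝ) = (((M+1).choose (j+1) * (j+1) : ℕ) : ℝ) := by
      exact_mod_cast congrArg (Nat.cast : ℕ → ℝ) h
    push_cast at h'
    linear_combination h'
  by_cases hj : j ≤ n
  · have h4 : ((j:ℝ)+1) * (n.choose (j+1) : ℝ) = ((n:ℝ) - j) * (n.choose j : ℝ) := by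
      have h := Nat.choose_succ_right_eq n j
      have h' : ((n.choose (j+1) * (j+1) : ℕ) : ℝ) = ((n.choose j * (n-j) : ℕ) : ℝ) := by
        exact_mod_cast congrArg (Nat.cast : ℕ → ℝ) h
      push_cast [Nat.cast_sub hj] at h'
      linear_combination h'
    linear_combination ((M+1).choose (j+1) : ℝ) * h4
      + ((n.choose (j+1) : ℝ) + (n.choose j : ℝ)) * h3
      + ((M:ℝ)+1) * (n.choose (j+1) : ℝ) * h1
      - ((n:ℝ)+1) * ((M+1).choose (j+1) : ℝ) * h2
  · push_neg at hj
    have b0 : n.choose j = 0 := Nat.choose_eq_zero_of_lt hj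
    have a0 : n.choose (j+1) = 0 := Nat.choose_eq_zero_of_lt (by omega)
    have r0 : (n+1).choose (j+1) = 0 := Nat.choose_eq_zero_of_lt (by omega)
    simp [b0, a0, r0]

lemma key (M n : ℕ) (x : ℝ) :
    ((M:ℝ) + n + 2) * x^2 *
        ∑ k ∈ Finset.range (n+1),
          (-1:ℝ)^k * (Nat.choose (M+1) k : ℝ) * (Nat.choose n k : ℝ) *
            x ^ (2*(n-k)) * (1-x^2)^k
      = ((M:ℝ) + 1) *
        ∑ k ∈ Finset.range (n+1),
          (-1:ℝ)^k * (Nat.choose M k : ℝ) * (Nat.choose n k : ℝ) *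
            x ^ (2*(n-k)) * (1-x^2)^k
      + ((n:ℝ) + 1) *
        ∑ k ∈ Finset.range (n+1+1),
          (-1:ℝ)^k * (Nat.choose (M+1) k : ℝ) * (Nat.choose (n+1) k : ℝ) *
            x ^ (2*(n+1-k)) * (1-x^2)^k := by
  have hA : ((M:ℝ) + n + 2) * x^2 *
        (∑ k ∈ Finset.range (n+1),
          (-1:ℝ)^k * (Nat.choose (M+1) k : ℝ) * (Nat.choose n k : ℝ) *
            x ^ (2*(n-k)) * (1-x^2)^k)
      = ∑ k ∈ Finset.range (n+1+1),
          ((M:ℝ)+n+2) * ((-1:ℝ)^k * (Nat.choose (M+1) k : ℝ) * (Nat.choose n k : ℝ)) *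
            (x ^ (2*(n+1-k)) * (1-x^2)^k) := by
    conv_lhs => rw [Finset.mul_sum]
    conv_rhs => rw [Finset.sum_range_succ]
    have htop : ((M:ℝ)+n+2) * ((-1:ℝ)^(n+1) * (Nat.choose (M+1) (n+1) : ℝ) *
        (Nat.choose n (n+1) : ℝ)) * (x ^ (2*(n+1-(n+1))) * (1-x^2)^(n+1)) = 0 := by
      simp [Nat.choose_succ_self]
    rw [htop, add_zero]
    apply Finset.sum_congr rfl
    intro k hk
    rw [Finset.mem_range] at hk
    have hexp : 2*(n+1-k) = 2*(n-k) + 2 := by omega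
    rw [hexp, pow_add]
    ring
  have hB1 : (∑ k ∈ Finset.range (n+1+1),
          (match k with
           | 0 => (0:ℝ)
           | (j+1) => ((M:ℝ)+1) * ((-1:ℝ)^j * (Nat.choose M j : ℝ) * (Nat.choose n j : ℝ)) *
               (x ^ (2*(n-j)) * (1-x^2)^(j+1))))
      = ∑ k ∈ Finset.range (n+1),
          ((M:ℝ)+1) * ((-1:ℝ)^k * (Nat.choose M k : ℝ) * (Nat.choose n k : ℝ)) *
            (x ^ (2*(n-k)) * (1-x^2)^(k+1)) := by
    rw [Finset.sum_range_succ']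
    simp
  have hB2 : (∑ k ∈ Finset.range (n+1+1),
          ((M:ℝ)+1) * ((-1:ℝ)^k * (Nat.choose M k : ℝ) * (Nat.choose n k : ℝ)) *
            (x ^ (2*(n+1-k)) * (1-x^2)^k))
      = ∑ k ∈ Finset.range (n+1),
          ((M:ℝ)+1) * ((-1:ℝ)^k * (Nat.choose M k : ℝ) * (Nat.choose n k : ℝ)) *
            (x ^ (2*(n+1-k)) * (1-x^2)^k) := by
    rw [Finset.sum_range_succ]
    simp [Nat.choose_succ_self]
  have hB : ((M:ℝ) + 1) *
        (∑ k ∈ Finset.range (n+1),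
          (-1:ℝ)^k * (Nat.choose M k : ℝ) * (Nat.choose n k : ℝ) *
            x ^ (2*(n-k)) * (1-x^2)^k)
      = ∑ k ∈ Finset.range (n+1+1),
          (((M:ℝ)+1) * ((-1:ℝ)^k * (Nat.choose M k : ℝ) * (Nat.choose n k : ℝ)) *
            (x ^ (2*(n+1-k)) * (1-x^2)^k)
          + (match k with
             | 0 => (0:ℝ)
             | (j+1) => ((M:ℝ)+1) * ((-1:ℝ)^j * (Nat.choose M j : ℝ) * (Nat.choose n j : ℝ)) *
                 (x ^ (2*(n-j)) * (1-x^2)^(j+1)))) := by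
    rw [Finset.sum_add_distrib, hB1, hB2, Finset.mul_sum, ← Finset.sum_add_distrib]
    apply Finset.sum_congr rfl
    intro k hk
    rw [Finset.mem_range] at hk
    have hexp : 2*(n+1-k) = 2*(n-k) + 2 := by omega
    rw [hexp, pow_add]
    ring
  rw [hA, hB, Finset.mul_sum, ← Finset.sum_add_distrib]
  apply Finset.sum_congr rfl
  intro k hk
  match k with
  | 0 => simp; push_cast; ring
  | (j+1) =>
    have hexp : 2*(n+1-(j+1)) = 2*(n-j) := by omega
    rw [hexp]
    linear_combination ((-1:ℝ)^(j+1) * (x ^ (2*(n-j)) * (1-x^2)^(j+1))) * coeff_id M n j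

theorem zernike_radial_recurrence_N_up (q N n : ℕ)
    (x : ℝ) (hx : x ∈ Set.Icc (0:ℝ) 1) :
    (2 * n + N + q + 2) * x * zernikeR q (N + 1) n x
      = (n + N + q + 1) * zernikeR q N n x + (n + 1) * zernikeR q N (n + 1) x := by
  have key' := key (n + N + q) n x
  push_cast at key'
  unfold zernikeR
  rw [show n + (N + 1) + q = n + N + q + 1 from by omega,
      show n + 1 + N + q = n + N + q + 1 from by omega]
  push_cast
  linear_combination (x ^ N) * key'
end

section
/- Let q be a nonnegative integer, N a positive integer, and n a nonnegative integer. Then for all x ∈ [0,1], (2n+N+q) · x · R_{N−1,n}(x) = (n+N+q) · R_{N,n}(x) + n · R_{N,n−1}(x), where the last term is interpreted as 0 when n = 0. -/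
open Finset

lemma keyR (m n j : ℕ) :
    ((n:ℝ) + m + 2) * (Nat.choose m (j+1)) * (Nat.choose (n+1) (j+1))
      + ((n:ℝ) + 1) * (Nat.choose m j) * (Nat.choose n j)
    = ((m:ℝ) + 1) * (Nat.choose (m+1) (j+1)) * (Nat.choose (n+1) (j+1))
      + ((n:ℝ) + 1) * (Nat.choose m (j+1)) * (Nat.choose n (j+1)) := by
  have h1 : ((Nat.choose (m+1) (j+1) : ℝ)) = Nat.choose m j + Nat.choose m (j+1) := by
    rw [Nat.choose_succ_succ]; push_cast; ring
  have h2 : ((Nat.choose (n+1) (j+1) : ℝ)) = Nat.choose n j + Nat.choose n (j+1) := by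
    rw [Nat.choose_succ_succ]; push_cast; ring
  have h3 : ((n:ℝ) + 1) * Nat.choose n j = ((j:ℝ) + 1) * Nat.choose (n+1) (j+1) := by
    have := congrArg (Nat.cast (R := ℝ)) (Nat.add_one_mul_choose_eq n j)
    push_cast at this; linarith
  have h4 : ((m:ℝ) + 1) * Nat.choose m j = ((j:ℝ) + 1) * Nat.choose (m+1) (j+1) := by
    have := congrArg (Nat.cast (R := ℝ)) (Nat.add_one_mul_choose_eq m j)
    push_cast at this; linarith
  rw [h2] at h3 ⊢
  rw [h1] at h4 ⊢
  linear_combination ((Nat.choose m (j+1):ℝ) + Nat.choose m j) * h3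
    - ((Nat.choose n j:ℝ) + Nat.choose n (j+1)) * h4


theorem zernike_radial_recurrence_N_down (q N n : ℕ) (hN : 1 ≤ N)
    (x : ℝ) (hx : x ∈ Set.Icc (0:ℝ) 1) :
    (2 * n + N + q) * x * zernikeR q (N - 1) n x
      = (n + N + q) * zernikeR q N n x
        + n * (if n = 0 then 0 else zernikeR q N (n - 1) x) := by
  obtain ⟨N', rfl⟩ : ∃ N', N = N' + 1 := ⟨N - 1, (Nat.succ_pred_eq_of_pos hN).symm⟩
  cases n with
  | zero => simp [zernikeR]; ring
  | succ n' =>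
    have e1 : n' + 1 + N' + q = n' + N' + q + 1 := by omega
    have e2 : n' + 1 + (N' + 1) + q = n' + N' + q + 2 := by omega
    have e3 : n' + (N' + 1) + q = n' + N' + q + 1 := by omega
    simp only [zernikeR, Nat.add_sub_cancel, if_neg (Nat.succ_ne_zero n'), e1, e2, e3]
    push_cast
    have split : (∑ k ∈ Finset.range (n' + 1),
          (-1:ℝ) ^ k * ((n' + N' + q + 1).choose k : ℝ) * (n'.choose k : ℝ) * x ^ (2 * (n' - k)) * (1 - x ^ 2) ^ k)
        = (∑ k ∈ Finset.range (n' + 1),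
            ((-1:ℝ) ^ k * ((n' + N' + q + 1).choose k : ℝ) * (n'.choose k : ℝ) * x ^ (2 * (n' + 1 - k)) * (1 - x ^ 2) ^ k
            + (-1:ℝ) ^ k * ((n' + N' + q + 1).choose k : ℝ) * (n'.choose k : ℝ) * x ^ (2 * (n' - k)) * (1 - x ^ 2) ^ (k+1))) := by
      refine Finset.sum_congr rfl fun k hk => ?_
      have hk' : k ≤ n' := Nat.lt_succ_iff.mp (Finset.mem_range.mp hk)
      rw [show 2 * (n' + 1 - k) = 2 * (n' - k) + 2 from by omega, pow_add, pow_succ]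
      ring
    have ext1 : (∑ k ∈ Finset.range (n' + 1 + 1),
          (-1:ℝ) ^ k * ((n' + N' + q + 1).choose k : ℝ) * (n'.choose k : ℝ) * x ^ (2 * (n' + 1 - k)) * (1 - x ^ 2) ^ k)
        = ∑ k ∈ Finset.range (n' + 1),
          (-1:ℝ) ^ k * ((n' + N' + q + 1).choose k : ℝ) * (n'.choose k : ℝ) * x ^ (2 * (n' + 1 - k)) * (1 - x ^ 2) ^ k := by
      rw [Finset.sum_range_succ]
      simp [Nat.choose_succ_self]
    have shift : (∑ k ∈ Finset.range (n' + 1 + 1),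
          (if k = 0 then (0:ℝ) else -((-1:ℝ) ^ k * ((n' + N' + q + 1).choose (k-1) : ℝ) * (n'.choose (k-1) : ℝ) * x ^ (2 * (n' + 1 - k)) * (1 - x ^ 2) ^ k)))
        = ∑ k ∈ Finset.range (n' + 1),
          (-1:ℝ) ^ k * ((n' + N' + q + 1).choose k : ℝ) * (n'.choose k : ℝ) * x ^ (2 * (n' - k)) * (1 - x ^ 2) ^ (k+1) := by
      rw [Finset.sum_range_succ' (fun k => if k = 0 then (0:ℝ) else -((-1:ℝ) ^ k * ((n' + N' + q + 1).choose (k-1) : ℝ) * (n'.choose (k-1) : ℝ) * x ^ (2 * (n' + 1 - k)) * (1 - x ^ 2) ^ k)) (n' + 1)]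
      simp only [Nat.succ_ne_zero, if_false, ite_false, Nat.succ_sub_succ_eq_sub,
        Nat.add_sub_cancel, Nat.sub_zero, ite_true, if_true, add_zero, reduceIte]
      refine Finset.sum_congr rfl fun k hk => ?_
      rw [pow_succ (-1:ℝ)]
      ring
    have per : ∀ k ∈ Finset.range (n' + 1 + 1),
        (2 * ((n':ℝ) + 1) + ((N':ℝ) + 1) + (q:ℝ)) *
            ((-1:ℝ) ^ k * ((n' + N' + q + 1).choose k : ℝ) * ((n'+1).choose k : ℝ) * x ^ (2 * (n' + 1 - k)) * (1 - x ^ 2) ^ k)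
        = ((n':ℝ) + 1 + ((N':ℝ) + 1) + (q:ℝ)) *
              ((-1:ℝ) ^ k * ((n' + N' + q + 2).choose k : ℝ) * ((n'+1).choose k : ℝ) * x ^ (2 * (n' + 1 - k)) * (1 - x ^ 2) ^ k)
          + ((n':ℝ) + 1) *
              ((-1:ℝ) ^ k * ((n' + N' + q + 1).choose k : ℝ) * (n'.choose k : ℝ) * x ^ (2 * (n' + 1 - k)) * (1 - x ^ 2) ^ k
              + (if k = 0 then (0:ℝ) else -((-1:ℝ) ^ k * ((n' + N' + q + 1).choose (k-1) : ℝ) * (n'.choose (k-1) : ℝ) * x ^ (2 * (n' + 1 - k)) * (1 - x ^ 2) ^ k))) := by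
      intro k hk
      cases k with
      | zero => simp; ring
      | succ j =>
        simp only [if_neg (Nat.succ_ne_zero j), Nat.add_sub_cancel]
        have hkey := keyR (n' + N' + q + 1) n' j
        have eidx : n' + N' + q + 1 + 1 = n' + N' + q + 2 := by omega
        rw [eidx] at hkey
        push_cast at hkey
        linear_combination ((-1:ℝ)^(j+1) * x ^ (2 * (n' + 1 - (j+1))) * (1 - x ^ 2) ^ (j+1)) * hkey
    have key : (2 * ((n':ℝ) + 1) + ((N':ℝ) + 1) + (q:ℝ)) *
          (∑ k ∈ Finset.range (n' + 1 + 1),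
            (-1:ℝ) ^ k * ((n' + N' + q + 1).choose k : ℝ) * ((n'+1).choose k : ℝ) * x ^ (2 * (n' + 1 - k)) * (1 - x ^ 2) ^ k)
        = ((n':ℝ) + 1 + ((N':ℝ) + 1) + (q:ℝ)) *
            (∑ k ∈ Finset.range (n' + 1 + 1),
              (-1:ℝ) ^ k * ((n' + N' + q + 2).choose k : ℝ) * ((n'+1).choose k : ℝ) * x ^ (2 * (n' + 1 - k)) * (1 - x ^ 2) ^ k)
          + ((n':ℝ) + 1) *
            ((∑ k ∈ Finset.range (n' + 1 + 1),
              (-1:ℝ) ^ k * ((n' + N' + q + 1).choose k : ℝ) * (n'.choose k : ℝ) * x ^ (2 * (n' + 1 - k)) * (1 - x ^ 2) ^ k)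
            + (∑ k ∈ Finset.range (n' + 1 + 1),
              (if k = 0 then (0:ℝ) else -((-1:ℝ) ^ k * ((n' + N' + q + 1).choose (k-1) : ℝ) * (n'.choose (k-1) : ℝ) * x ^ (2 * (n' + 1 - k)) * (1 - x ^ 2) ^ k)))) := by
      rw [Finset.mul_sum, Finset.sum_congr rfl per]
      simp only [Finset.sum_add_distrib, ← Finset.mul_sum]
    rw [split, Finset.sum_add_distrib, ← ext1, ← shift]
    linear_combination x ^ (N' + 1) * key
end

section
/- Let q and N be nonnegative integers and n a positive integer. Then for all x ∈ (0,1), (2n+N+q) · x(1−x²) · R′_{N,n}(x) = ( N(2n+N+q) + 2n² − (2n+N)(2n+N+q)x² ) · R_{N,n}(x) + 2n(n+N+q) · R_{N,n−1}(x), where R′_{N,n} denotes the derivative of R_{N,n}. -/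
open Finset

/-!
Put `a = x²` and `b = 1 - x²`, so that `R_{N,n} = x^N ∑ₖ cₖ a^(n-k) bᵏ` is `x^N` times a form of
degree `n` in `(a, b)`. Because `a + b = 1`, the operator `x (1 - x²) d/dx` sends
`x^N a^(n-k) bᵏ` to `((N + 2n) b - 2k) x^N a^(n-k) bᵏ`, so the relation reduces to
`(2n + N + q) ∑ₖ k cₖ x^N a^(n-k) bᵏ = n (n + N + q) (R_{N,n} - R_{N,n-1})`.
Multiplying `R_{N,n-1}` by `a + b = 1` puts both sides in the basis `x^N a^(n-k) bᵏ`, where the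
coefficients agree by the two ratio recurrences of the binomial coefficients.
-/

namespace Nat

theorem cast_choose_succ_mul {R : Type*} [CommRing R] (n k : ℕ) :
    (n.choose (k + 1) : R) * (k + 1) = n.choose k * (n - k) := by
  rcases le_or_gt k n with hk | hk
  · exact_mod_cast congrArg (Nat.cast (R := R)) (choose_succ_right_eq n k) |>.trans
      (by push_cast [Nat.cast_sub hk]; ring)
  · simp [choose_eq_zero_of_lt hk, choose_eq_zero_of_lt (lt_succ_of_lt hk)]

theorem cast_choose_mul_succ {R : Type*} [CommRing R] (n k : ℕ) :
    (n.choose k : R) * (n + 1) = (n + 1).choose k * (n + 1 - k) := by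
  rcases le_or_gt k (n + 1) with hk | hk
  · exact_mod_cast congrArg (Nat.cast (R := R)) (choose_mul_succ_eq n k) |>.trans
      (by push_cast [Nat.cast_sub hk]; ring)
  · simp [choose_eq_zero_of_lt hk, choose_eq_zero_of_lt (lt_of_succ_lt hk)]

end Nat

namespace Zernike

noncomputable def coeff (q N n k : ℕ) : ℝ := (-1) ^ k * (n + N + q).choose k * n.choose k

noncomputable def basis (N n k : ℕ) (x : ℝ) : ℝ := x ^ (N + 2 * (n - k)) * (1 - x ^ 2) ^ k

theorem coeff_zero (q N n : ℕ) : coeff q N n 0 = 1 := by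
  simp [coeff]

theorem coeff_of_lt {q N n k : ℕ} (h : n < k) : coeff q N n k = 0 := by
  simp [coeff, Nat.choose_eq_zero_of_lt h]

theorem sq_mul_coeff_succ (q N n k : ℕ) :
    ((k : ℝ) + 1) ^ 2 * coeff q N n (k + 1)
      = -((n : ℝ) + N + q - k) * ((n : ℝ) - k) * coeff q N n k := by
  have hm := Nat.cast_choose_succ_mul (R := ℝ) (n + N + q) k
  have hn := Nat.cast_choose_succ_mul (R := ℝ) n k
  simp only [coeff, pow_succ]
  push_cast at hm
  linear_combination (-(-1 : ℝ) ^ k) * ((k + 1) * (n.choose (k + 1) : ℝ) * hm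
    + ((n : ℝ) + N + q - k) * ((n + N + q).choose k : ℝ) * hn)

theorem mul_coeff_eq_mul_coeff_succ (q N n k : ℕ) :
    ((n : ℝ) + 1) * ((n : ℝ) + 1 + N + q) * coeff q N n k
      = ((n : ℝ) + 1 - k) * ((n : ℝ) + 1 + N + q - k) * coeff q N (n + 1) k := by
  have hm := Nat.cast_choose_mul_succ (R := ℝ) (n + N + q) k
  have hn := Nat.cast_choose_mul_succ (R := ℝ) n k
  have hidx : n + 1 + N + q = n + N + q + 1 := by ring
  simp only [coeff, hidx]
  push_cast at hm ⊢
  linear_combination (-1 : ℝ) ^ k * ((n + 1) * (n.choose k : ℝ) * hm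
    + ((n : ℝ) + N + q + 1 - k) * ((n + N + q + 1).choose k : ℝ) * hn)

theorem coeff_succ_relation (q N n j : ℕ) :
    (2 * ((n : ℝ) + 1) + N + q) * ((j : ℝ) + 1) * coeff q N (n + 1) (j + 1)
      = ((n : ℝ) + 1) * ((n : ℝ) + 1 + N + q)
        * (coeff q N (n + 1) (j + 1) - coeff q N n (j + 1) - coeff q N n j) := by
  have hj₁ := mul_coeff_eq_mul_coeff_succ q N n (j + 1)
  have hj := mul_coeff_eq_mul_coeff_succ q N n j
  have hrec := sq_mul_coeff_succ q N (n + 1) j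
  push_cast at hj₁ hrec
  linear_combination hj₁ + hj + hrec

theorem zernikeR_eq_sum (q N n : ℕ) (x : ℝ) :
    zernikeR q N n x = ∑ k ∈ range (n + 1), coeff q N n k * basis N n k x := by
  simp only [zernikeR, coeff, basis, mul_sum, pow_add]
  exact sum_congr rfl fun k _ => by ring

theorem basis_eq_basis_succ_add {N n k : ℕ} (hk : k ≤ n) (x : ℝ) :
    basis N n k x = basis N (n + 1) k x + basis N (n + 1) (k + 1) x := by
  have h₁ : N + 2 * (n + 1 - k) = N + 2 * (n - k) + 2 := by omega
  have h₂ : n + 1 - (k + 1) = n - k := by omega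
  simp only [basis, h₁, h₂, pow_add, pow_succ]
  ring

theorem hasDerivAt_basis (N n k : ℕ) (x : ℝ) :
    HasDerivAt (basis N n k)
      ((N + 2 * (n - k) : ℕ) * x ^ (N + 2 * (n - k) - 1) * (1 - x ^ 2) ^ k
        + x ^ (N + 2 * (n - k)) * (k * (1 - x ^ 2) ^ (k - 1) * -(2 * x))) x := by
  have hb : HasDerivAt (fun y : ℝ => 1 - y ^ 2) (-(2 * x)) x := by
    simpa using (hasDerivAt_pow 2 x).const_sub 1
  exact (hasDerivAt_pow _ x).mul (hb.pow k)

theorem mul_deriv_basis {N n k : ℕ} (hk : k ≤ n) (x : ℝ) :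
    x * (1 - x ^ 2) * deriv (basis N n k) x
      = (((N : ℝ) + 2 * n) * (1 - x ^ 2) - 2 * k) * basis N n k x := by
  rw [(hasDerivAt_basis N n k x).deriv, basis]
  obtain ⟨p, hp⟩ : ∃ p, p = N + 2 * (n - k) := ⟨_, rfl⟩
  have hdeg : ((N : ℝ) + 2 * n) = p + 2 * k := by
    rw [hp]; push_cast [Nat.cast_sub hk]; ring
  rw [← hp, hdeg]
  rcases p with _ | p <;> rcases k with _ | k <;> simp [pow_succ] <;> ring

theorem mul_deriv_zernikeR (q N n : ℕ) (x : ℝ) :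
    x * (1 - x ^ 2) * deriv (zernikeR q N n) x
      = ((N : ℝ) + 2 * n) * (1 - x ^ 2) * zernikeR q N n x
        - 2 * ∑ k ∈ range (n + 1), (k : ℝ) * coeff q N n k * basis N n k x := by
  have hR : zernikeR q N n = fun y => ∑ k ∈ range (n + 1), coeff q N n k * basis N n k y :=
    funext (zernikeR_eq_sum q N n)
  have hderiv : deriv (zernikeR q N n) x
      = ∑ k ∈ range (n + 1), coeff q N n k * deriv (basis N n k) x := by
    rw [hR, deriv_fun_sum fun k _ => (hasDerivAt_basis N n k x).differentiableAt.const_mul _]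
    exact sum_congr rfl fun k _ => deriv_const_mul _ (hasDerivAt_basis N n k x).differentiableAt
  rw [hderiv, zernikeR_eq_sum, mul_sum, mul_sum, mul_sum, ← sum_sub_distrib]
  refine sum_congr rfl fun k hk => ?_
  linear_combination coeff q N n k * mul_deriv_basis (N := N) (mem_range_succ_iff.mp hk) x

theorem mul_sum_mul_coeff_basis (q N n : ℕ) (x : ℝ) :
    (2 * (n : ℝ) + N + q) * ∑ k ∈ range (n + 1), (k : ℝ) * coeff q N n k * basis N n k x
      = n * (n + N + q) * (zernikeR q N n x - zernikeR q N (n - 1) x) := by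
  rcases n with _ | n
  · simp
  have hlower : zernikeR q N n x
      = ∑ k ∈ range (n + 1 + 1), coeff q N n k * basis N (n + 1) k x
        + ∑ k ∈ range (n + 1), coeff q N n k * basis N (n + 1) (k + 1) x := by
    rw [zernikeR_eq_sum, sum_range_succ _ (n + 1), coeff_of_lt (lt_add_one n), zero_mul,
      add_zero, ← sum_add_distrib]
    exact sum_congr rfl fun k hk => by
      rw [basis_eq_basis_succ_add (mem_range_succ_iff.mp hk)]; ring
  have hterm : ∀ j ∈ range (n + 1),
      (2 * ((n : ℝ) + 1) + N + q) * (((j : ℝ) + 1) * coeff q N (n + 1) (j + 1)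
        * basis N (n + 1) (j + 1) x)
      = ((n : ℝ) + 1) * ((n : ℝ) + 1 + N + q)
        * (coeff q N (n + 1) (j + 1) * basis N (n + 1) (j + 1) x
          - coeff q N n (j + 1) * basis N (n + 1) (j + 1) x
          - coeff q N n j * basis N (n + 1) (j + 1) x) := fun j _ => by
    linear_combination basis N (n + 1) (j + 1) x * coeff_succ_relation q N n j
  rw [Nat.add_sub_cancel, hlower, zernikeR_eq_sum]
  simp only [sum_range_succ' _ (n + 1), coeff_zero, CharP.cast_eq_zero, zero_mul, add_zero]
  push_cast
  rw [mul_sum, sum_congr rfl hterm, ← mul_sum, sum_sub_distrib, sum_sub_distrib]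
  ring

end Zernike

theorem zernike_radial_differential_relation_general (q N n : ℕ)
    (x : ℝ) :
    (2 * n + N + q) * (x * (1 - x ^ 2)) * deriv (zernikeR q N n) x
      = ((N : ℝ) * (2 * n + N + q) + 2 * (n : ℝ) ^ 2
          - (2 * n + N) * (2 * n + N + q) * x ^ 2) * zernikeR q N n x
        + 2 * n * (n + N + q) * zernikeR q N (n - 1) x := by
  rw [mul_assoc, Zernike.mul_deriv_zernikeR]
  linear_combination -2 * Zernike.mul_sum_mul_coeff_basis q N n x

theorem zernike_radial_differential_relation (q N n : ℕ) (hn : 1 ≤ n)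
    (x : ℝ) (hx : x ∈ Set.Ioo (0:ℝ) 1) :
    (2 * n + N + q) * (x * (1 - x ^ 2)) * deriv (zernikeR q N n) x
      = ((N : ℝ) * (2 * n + N + q) + 2 * (n : ℝ) ^ 2
          - (2 * n + N) * (2 * n + N + q) * x ^ 2) * zernikeR q N n x
        + 2 * n * (n + N + q) * zernikeR q N (n - 1) x :=
  zernike_radial_differential_relation_general q N n x
end

section
/- Let q, N, n be nonnegative integers. Then the k-th derivative of R_{N,n} at 0 vanishes for every k ∈ {0, 1, …, N−1}, and the N-th derivative of R_{N,n} at 0 equals (−1)^n · N! · C(n+N+q, n). -/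
open Finset

open Polynomial in
noncomputable def zernikeQ (q N n : ℕ) : ℝ[X] :=
  ∑ k ∈ Finset.range (n + 1),
    C ((-1 : ℝ) ^ k * (Nat.choose (n + N + q) k : ℝ) * (Nat.choose n k : ℝ)) *
      X ^ (2 * (n - k)) * (1 - X ^ 2) ^ k

open Polynomial in
lemma zernikeR_eq_eval (q N n : ℕ) (x : ℝ) :
    zernikeR q N n x = (X ^ N * zernikeQ q N n).eval x := by
  simp [zernikeR, zernikeQ, eval_finset_sum]

open Polynomial in
lemma iteratedDeriv_eval (p : ℝ[X]) (k : ℕ) (x : ℝ) :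
    iteratedDeriv k (fun y => p.eval y) x = (derivative^[k] p).eval x := by
  induction k generalizing p with
  | zero => simp
  | succ k ih =>
    rw [iteratedDeriv_succ', Function.iterate_succ_apply]
    rw [← ih p.derivative]
    congr 1
    funext y
    exact Polynomial.deriv p

open Polynomial in
lemma zernikeQ_eval_zero (q N n : ℕ) :
    (zernikeQ q N n).eval 0 = (-1 : ℝ) ^ n * (Nat.choose (n + N + q) n : ℝ) := by
  rw [zernikeQ, eval_finset_sum]
  rw [Finset.sum_eq_single n]
  · simp
  · intro k hk hkn
    have h : 0 < 2 * (n - k) := by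
      have : k < n := lt_of_le_of_ne (Nat.lt_succ_iff.mp (Finset.mem_range.mp hk)) hkn
      omega
    simp [zero_pow h.ne']
  · intro h
    exact absurd (Finset.self_mem_range_succ n) h

theorem zernike_radial_derivatives_at_zero (q N n : ℕ) :
    (∀ k < N, iteratedDeriv k (zernikeR q N n) 0 = 0) ∧
      iteratedDeriv N (zernikeR q N n) 0
        = (-1 : ℝ) ^ n * (Nat.factorial N : ℝ) * (Nat.choose (n + N + q) n : ℝ) := by
  have heq : zernikeR q N n = fun x => (Polynomial.X ^ N * zernikeQ q N n).eval x := by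
    funext x; exact zernikeR_eq_eval q N n x
  have key : ∀ k : ℕ, iteratedDeriv k (zernikeR q N n) 0
      = (Nat.factorial k : ℝ) * (Polynomial.X ^ N * zernikeQ q N n).coeff k := by
    intro k
    rw [heq, iteratedDeriv_eval]
    rw [← Polynomial.coeff_zero_eq_eval_zero, Polynomial.coeff_iterate_derivative]
    simp [Nat.descFactorial_self, nsmul_eq_mul]
  constructor
  · intro k hk
    rw [key k]
    have : (Polynomial.X ^ N * zernikeQ q N n).coeff k = 0 := by
      rw [mul_comm, Polynomial.coeff_mul_X_pow']
      simp [Nat.not_le.mpr hk]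
    rw [this, mul_zero]
  · rw [key N]
    have : (Polynomial.X ^ N * zernikeQ q N n).coeff N = (zernikeQ q N n).coeff 0 := by
      rw [mul_comm, Polynomial.coeff_mul_X_pow']
      simp
    rw [this, Polynomial.coeff_zero_eq_eval_zero, zernikeQ_eval_zero]
    ring
end

section
/- Let a < b be real numbers, let α, β : (a,b) → ℝ be differentiable with β(x) > 0 for all x ∈ (a,b), and let φ : (a,b) → ℝ be twice differentiable with φ(x) ≠ 0 for all x ∈ (a,b), satisfying φ″(x) + α(x)φ′(x) + β(x)φ(x) = 0 on (a,b). Suppose θ : (a,b) → ℝ is differentiable, cos(θ(x)) ≠ 0 for all x ∈ (a,b), and φ′(x)/φ(x) = √(β(x)) · tan(θ(x)) for all x ∈ (a,b). Then for all x ∈ (a,b), θ′(x) = −√(β(x)) − ( β′(x)/(4β(x)) + α(x)/2 ) · sin(2θ(x)). -/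
/-!
Where `φ ≠ 0`, the logarithmic derivative `u = φ'/φ` of a solution of `φ'' + αφ' + βφ = 0`
satisfies the Riccati equation `u' = -αu - β - u²`. Differentiating `u = √β · tan θ` instead and
equating the two expressions for `u'` gives a linear equation for `θ'`; multiplying it by
`cos² θ / √β` and using `sin² θ + cos² θ = 1` and `2 sin θ cos θ = sin 2θ` solves it.
-/

open Real Set

theorem hasDerivAt_logDeriv_of_linear_ode {φ : ℝ → ℝ} {p q x : ℝ}
    (hφ : DifferentiableAt ℝ φ x) (hφ' : DifferentiableAt ℝ (deriv φ) x) (hφx : φ x ≠ 0)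
    (hode : deriv (deriv φ) x + p * deriv φ x + q * φ x = 0) :
    HasDerivAt (logDeriv φ) (-p * logDeriv φ x - q - logDeriv φ x ^ 2) x := by
  have hquot : HasDerivAt (logDeriv φ)
      ((deriv (deriv φ) x * φ x - deriv φ x * deriv φ x) / φ x ^ 2) x :=
    hφ'.hasDerivAt.div hφ.hasDerivAt hφx
  convert hquot using 1
  rw [logDeriv_apply, eq_div_iff (pow_ne_zero 2 hφx)]
  field_simp
  linear_combination (-φ x) * hode

theorem hasDerivAt_sqrt_mul_tan {β θ : ℝ → ℝ} {β' θ' x : ℝ}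
    (hβ : HasDerivAt β β' x) (hβx : β x ≠ 0) (hθ : HasDerivAt θ θ' x) (hc : cos (θ x) ≠ 0) :
    HasDerivAt (fun y => √(β y) * tan (θ y))
      (β' / (2 * √(β x)) * tan (θ x) + √(β x) * (θ' / cos (θ x) ^ 2)) x := by
  refine ((hβ.sqrt hβx).mul ((hasDerivAt_tan hc).comp x hθ)).congr_deriv ?_
  rw [Function.comp_apply]
  ring

theorem prufer_phase_deriv_eq {s q β' p θ θ' : ℝ} (hs : s ≠ 0) (hsq : s ^ 2 = q)
    (hc : cos θ ≠ 0)
    (h : β' / (2 * s) * tan θ + s * (θ' / cos θ ^ 2) = -p * (s * tan θ) - q - (s * tan θ) ^ 2) :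
    θ' = -s - (β' / (4 * q) + p / 2) * sin (2 * θ) := by
  subst hsq
  rw [tan_eq_sin_div_cos] at h
  rw [sin_two_mul]
  field_simp at h ⊢
  linear_combination 2 * h - 4 * s ^ 3 * sin_sq_add_cos_sq θ

theorem prufer_transform_general
    (a b : ℝ)
    (α β φ θ : ℝ → ℝ)
    (hβ : ∀ x ∈ Set.Ioo a b, DifferentiableAt ℝ β x)
    (hβpos : ∀ x ∈ Set.Ioo a b, 0 < β x)
    (hφ : ∀ x ∈ Set.Ioo a b, DifferentiableAt ℝ φ x)
    (hφ' : ∀ x ∈ Set.Ioo a b, DifferentiableAt ℝ (deriv φ) x)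
    (hφne : ∀ x ∈ Set.Ioo a b, φ x ≠ 0)
    (hode : ∀ x ∈ Set.Ioo a b,
      deriv (deriv φ) x + α x * deriv φ x + β x * φ x = 0)
    (hθ : ∀ x ∈ Set.Ioo a b, DifferentiableAt ℝ θ x)
    (hcos : ∀ x ∈ Set.Ioo a b, Real.cos (θ x) ≠ 0)
    (htan : ∀ x ∈ Set.Ioo a b,
      deriv φ x / φ x = Real.sqrt (β x) * Real.tan (θ x)) :
    ∀ x ∈ Set.Ioo a b,
      deriv θ x = -Real.sqrt (β x)
        - (deriv β x / (4 * β x) + α x / 2) * Real.sin (2 * θ x) := by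
  intro x hx
  have hβx := hβpos x hx
  have hlog_eq : logDeriv φ =ᶠ[nhds x] fun y => √(β y) * tan (θ y) :=
    Filter.eventuallyEq_of_mem (isOpen_Ioo.mem_nhds hx) fun y hy => htan y hy
  have hriccati :=
    hasDerivAt_logDeriv_of_linear_ode (hφ x hx) (hφ' x hx) (hφne x hx) (hode x hx)
  have hprufer := (hasDerivAt_sqrt_mul_tan (hβ x hx).hasDerivAt hβx.ne' (hθ x hx).hasDerivAt
    (hcos x hx)).congr_of_eventuallyEq hlog_eq
  rw [hlog_eq.eq_of_nhds] at hriccati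
  exact prufer_phase_deriv_eq (sqrt_pos.mpr hβx).ne' (sq_sqrt hβx.le) (hcos x hx)
    (hprufer.unique hriccati)

theorem prufer_transform
    (a b : ℝ) (hab : a < b)
    (α β φ θ : ℝ → ℝ)
    (hα : ∀ x ∈ Set.Ioo a b, DifferentiableAt ℝ α x)
    (hβ : ∀ x ∈ Set.Ioo a b, DifferentiableAt ℝ β x)
    (hβpos : ∀ x ∈ Set.Ioo a b, 0 < β x)
    (hφ : ∀ x ∈ Set.Ioo a b, DifferentiableAt ℝ φ x)
    (hφ' : ∀ x ∈ Set.Ioo a b, DifferentiableAt ℝ (deriv φ) x)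
    (hφne : ∀ x ∈ Set.Ioo a b, φ x ≠ 0)
    (hode : ∀ x ∈ Set.Ioo a b,
      deriv (deriv φ) x + α x * deriv φ x + β x * φ x = 0)
    (hθ : ∀ x ∈ Set.Ioo a b, DifferentiableAt ℝ θ x)
    (hcos : ∀ x ∈ Set.Ioo a b, Real.cos (θ x) ≠ 0)
    (htan : ∀ x ∈ Set.Ioo a b,
      deriv φ x / φ x = Real.sqrt (β x) * Real.tan (θ x)) :
    ∀ x ∈ Set.Ioo a b,
      deriv θ x = -Real.sqrt (β x)
        - (deriv β x / (4 * β x) + α x / 2) * Real.sin (2 * θ x) :=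
  prufer_transform_general a b α β φ θ hβ hβpos hφ hφ' hφne hode hθ hcos htan
end

section
/- Let p ≥ 0 and N ≥ 1 be integers and set d = p + 2. Then the real vector space of polynomials P in d variables over ℝ that are homogeneous of degree N and harmonic (i.e. Σ_{i=1}^{d} ∂²P/∂x_i² = 0) has dimension (2N + p) · (N + p − 1)! / (p! · N!). -/
/-!
Let `P n` be the space of homogeneous polynomials of degree `n` in `d` variables; it has dimension
`(d + n - 1).choose n`. For the Fischer pairing `⟨p, q⟩ = ∑ₛ s! pₛ qₛ`, the derivative `∂ᵢ` is
adjoint to multiplication by `xᵢ`, so the Laplacian `Δ` is adjoint to multiplication by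
`r² = ∑ᵢ xᵢ²`. Since the pairing is positive definite, `Δ (r² q) = 0` forces `q = 0`; hence
`Δ : P (n + 2) → P n` is onto, and the harmonic part of `P (n + 2)` has dimension
`dim P (n + 2) - dim P n`. Every linear form is harmonic, and in both cases the closed form follows
from Pascal's rule.
-/

open MvPolynomial

/-- The Laplacian `Σ_i ∂²/∂x_i²` on polynomials in `d` variables, as a linear map. -/
noncomputable def polyLaplacian (d : ℕ) :
    MvPolynomial (Fin d) ℝ →ₗ[ℝ] MvPolynomial (Fin d) ℝ :=
  ∑ i : Fin d, ((pderiv i).toLinearMap ∘ₗ (pderiv i).toLinearMap)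

/-- The space of polynomials in `d` variables that are homogeneous of degree `N`
and harmonic. -/
noncomputable def harmonicHomogeneous (d N : ℕ) : Submodule ℝ (MvPolynomial (Fin d) ℝ) :=
  MvPolynomial.homogeneousSubmodule (Fin d) ℝ N ⊓ LinearMap.ker (polyLaplacian d)

namespace Finsupp

variable {σ : Type*}

def factorial (s : σ →₀ ℕ) : ℕ :=
  s.prod fun _ k => k.factorial

theorem factorial_pos (s : σ →₀ ℕ) : 0 < s.factorial :=
  Finset.prod_pos fun _ _ => Nat.factorial_pos _

theorem factorial_add_single (s : σ →₀ ℕ) (i : σ) :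
    (s + single i 1).factorial = (s i + 1) * s.factorial := by
  unfold factorial
  rw [← mul_prod_erase' _ i _ (fun _ => Nat.factorial_zero),
    ← mul_prod_erase' s i _ (fun _ => Nat.factorial_zero), erase_add, erase_single, add_zero,
    add_apply, single_eq_same, Nat.factorial_succ, mul_assoc]

end Finsupp

namespace MvPolynomial

variable {σ R : Type*}

section CommSemiring

variable [CommSemiring R]

noncomputable def fischerPairing : LinearMap.BilinForm R (MvPolynomial σ R) :=
  LinearMap.mk₂ R
    (fun p q => (AddMonoidAlgebra.coeff p).sum fun s a => a * coeff s q * s.factorial)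
    (fun p₁ p₂ q => by
      rw [AddMonoidAlgebra.coeff_add]
      exact Finsupp.sum_add_index' (by simp) (by intros; ring))
    (fun c p q => by
      rw [AddMonoidAlgebra.coeff_smul, Finsupp.sum_smul_index' (by simp), smul_eq_mul,
        Finsupp.mul_sum]
      exact Finset.sum_congr rfl fun _ _ => by ring)
    (fun p q₁ q₂ => by
      rw [← Finsupp.sum_add]
      exact Finset.sum_congr rfl fun _ _ => by simp only [coeff_add]; ring)
    (fun c p q => by
      rw [smul_eq_mul, Finsupp.mul_sum]
      exact Finset.sum_congr rfl fun _ _ => by simp only [coeff_smul, smul_eq_mul]; ring)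

theorem fischerPairing_apply (p q : MvPolynomial σ R) :
    fischerPairing p q = ∑ s ∈ p.support, coeff s p * coeff s q * s.factorial := by
  rw [fischerPairing, LinearMap.mk₂_apply, sum_def]

theorem fischerPairing_monomial_right (p : MvPolynomial σ R) (t : σ →₀ ℕ) (b : R) :
    fischerPairing p (monomial t b) = coeff t p * b * t.factorial := by
  classical
  rw [fischerPairing_apply, Finset.sum_eq_single t]
  · rw [coeff_monomial, if_pos rfl]
  · intro s _ hst
    rw [coeff_monomial, if_neg (Ne.symm hst), mul_zero, zero_mul]
  · intro ht
    rw [notMem_support_iff.mp ht, zero_mul, zero_mul]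

theorem fischerPairing_pderiv_left (i : σ) (p q : MvPolynomial σ R) :
    fischerPairing (pderiv i p) q = fischerPairing p (X i * q) := by
  induction q using MvPolynomial.induction_on' with
  | monomial t b =>
    rw [← pow_one (X i), mul_comm, ← monomial_add_single, fischerPairing_monomial_right,
      fischerPairing_monomial_right, coeff_pderiv, Finsupp.factorial_add_single]
    push_cast
    ring
  | add q₁ q₂ h₁ h₂ => rw [mul_add, map_add, map_add, h₁, h₂]

theorem pderiv_eq_zero_of_isHomogeneous_zero {p : MvPolynomial σ R} (hp : p.IsHomogeneous 0)
    (i : σ) : pderiv i p = 0 := by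
  rw [totalDegree_eq_zero_iff_eq_C.mp ((totalDegree_zero_iff_isHomogeneous σ).mpr hp), pderiv_C]

instance [Finite σ] (n : ℕ) : Module.Finite R (homogeneousSubmodule σ R n) :=
  Module.Finite.iff_fg.mpr (homogeneousSubmodule_fg σ R n)

end CommSemiring

theorem fischerPairing_self_pos [CommRing R] [LinearOrder R] [IsStrictOrderedRing R]
    {p : MvPolynomial σ R} (hp : p ≠ 0) : 0 < fischerPairing p p := by
  rw [fischerPairing_apply]
  refine Finset.sum_pos (fun s hs => mul_pos (mul_self_pos.mpr (mem_support_iff.mp hs)) ?_)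
    (support_nonempty.mpr hp)
  exact_mod_cast s.factorial_pos

theorem finrank_homogeneousSubmodule [Fintype σ] [CommRing R] [StrongRankCondition R] (n : ℕ) :
    Module.finrank R (homogeneousSubmodule σ R n) = (Fintype.card σ + n - 1).choose n := by
  classical
  have hset : {s : σ →₀ ℕ | s.degree = n}
      = (Finset.univ.finsuppAntidiag n : Finset (σ →₀ ℕ)) := by
    ext s
    simp [Finsupp.degree_eq_sum]
  rw [homogeneousSubmodule_eq_finsupp_supported, hset,
    ← Finset.card_univ, ← Finset.card_finsuppAntidiag_nat_eq_choose, ← Set.ncard_coe_finset,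
    ← Nat.card_coe_set_eq]
  exact Module.finrank_eq_nat_card_basis (basisRestrictSupport R _)

end MvPolynomial

section Laplacian

variable {d : ℕ}

theorem polyLaplacian_apply (p : MvPolynomial (Fin d) ℝ) :
    polyLaplacian d p = ∑ i, pderiv i (pderiv i p) := by
  simp only [polyLaplacian, LinearMap.coe_sum, LinearMap.coe_comp, Derivation.coeFn_coe,
    Finset.sum_apply, Function.comp_apply]

noncomputable def radiusSq (d : ℕ) : MvPolynomial (Fin d) ℝ :=
  ∑ i, X i ^ 2

theorem radiusSq_isHomogeneous : (radiusSq d).IsHomogeneous 2 :=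
  IsHomogeneous.sum _ _ _ fun i _ => isHomogeneous_X_pow i 2

theorem radiusSq_ne_zero [NeZero d] : radiusSq d ≠ 0 := fun h =>
  NeZero.ne d (by simpa [radiusSq] using congrArg (eval fun _ => (1 : ℝ)) h)

theorem fischerPairing_polyLaplacian_left (p q : MvPolynomial (Fin d) ℝ) :
    fischerPairing (polyLaplacian d p) q = fischerPairing p (radiusSq d * q) := by
  rw [polyLaplacian_apply, map_sum, LinearMap.sum_apply, radiusSq, Finset.sum_mul, map_sum]
  refine Finset.sum_congr rfl fun i _ => ?_
  rw [fischerPairing_pderiv_left, fischerPairing_pderiv_left, ← mul_assoc, ← sq]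

theorem polyLaplacian_comp_mulLeft_radiusSq_injective [NeZero d] :
    Function.Injective (polyLaplacian d ∘ₗ LinearMap.mulLeft ℝ (radiusSq d)) := by
  refine (injective_iff_map_eq_zero _).mpr fun q hq => by_contra fun hq0 => ?_
  have hpos := fischerPairing_self_pos (mul_ne_zero radiusSq_ne_zero hq0)
  have h := fischerPairing_polyLaplacian_left (radiusSq d * q) q
  rw [show polyLaplacian d (radiusSq d * q) = 0 from hq, map_zero, LinearMap.zero_apply] at h
  exact hpos.ne h

theorem isHomogeneous_polyLaplacian {p : MvPolynomial (Fin d) ℝ} {n : ℕ}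
    (hp : p.IsHomogeneous n) : (polyLaplacian d p).IsHomogeneous (n - 2) := by
  rw [polyLaplacian_apply]
  exact IsHomogeneous.sum _ _ _ fun i _ => by simpa [Nat.sub_sub] using hp.pderiv.pderiv (i := i)

theorem polyLaplacian_eq_zero_of_isHomogeneous {p : MvPolynomial (Fin d) ℝ} {n : ℕ}
    (hp : p.IsHomogeneous n) (hn : n < 2) : polyLaplacian d p = 0 := by
  rw [polyLaplacian_apply]
  refine Finset.sum_eq_zero fun i _ => pderiv_eq_zero_of_isHomogeneous_zero ?_ i
  simpa [show n - 1 = 0 by omega] using hp.pderiv (i := i)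

end Laplacian

section Dimension

open Module

variable {d : ℕ}

theorem map_polyLaplacian_homogeneousSubmodule [NeZero d] (n : ℕ) :
    (homogeneousSubmodule (Fin d) ℝ (n + 2)).map (polyLaplacian d)
      = homogeneousSubmodule (Fin d) ℝ n := by
  have hle : (homogeneousSubmodule (Fin d) ℝ (n + 2)).map (polyLaplacian d)
      ≤ homogeneousSubmodule (Fin d) ℝ n :=
    Submodule.map_le_iff_le_comap.mpr fun p hp => by
      simpa using isHomogeneous_polyLaplacian (d := d) hp
  have hmul : (homogeneousSubmodule (Fin d) ℝ n).map (LinearMap.mulLeft ℝ (radiusSq d))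
      ≤ homogeneousSubmodule (Fin d) ℝ (n + 2) :=
    Submodule.map_le_iff_le_comap.mpr fun q hq => by
      simpa [add_comm] using radiusSq_isHomogeneous.mul hq
  refine Submodule.eq_of_le_of_finrank_le hle ?_
  calc finrank ℝ (homogeneousSubmodule (Fin d) ℝ n)
      = finrank ℝ ((homogeneousSubmodule (Fin d) ℝ n).map
          (polyLaplacian d ∘ₗ LinearMap.mulLeft ℝ (radiusSq d))) :=
        (Submodule.equivMapOfInjective _ polyLaplacian_comp_mulLeft_radiusSq_injective _).finrank_eq
    _ ≤ finrank ℝ ((homogeneousSubmodule (Fin d) ℝ (n + 2)).map (polyLaplacian d)) := by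
        rw [Submodule.map_comp]
        exact Submodule.finrank_mono (Submodule.map_mono hmul)

theorem finrank_harmonicHomogeneous_add_finrank [NeZero d] (n : ℕ) :
    finrank ℝ (harmonicHomogeneous d (n + 2)) + finrank ℝ (homogeneousSubmodule (Fin d) ℝ n)
      = finrank ℝ (homogeneousSubmodule (Fin d) ℝ (n + 2)) := by
  have h := LinearMap.finrank_range_add_finrank_ker
    ((polyLaplacian d).domRestrict (homogeneousSubmodule (Fin d) ℝ (n + 2)))
  rw [LinearMap.range_domRestrict, map_polyLaplacian_homogeneousSubmodule,
    LinearMap.ker_domRestrict] at h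
  rw [← h, add_comm, harmonicHomogeneous,
    ← (Submodule.comapSubtypeEquivOfLe inf_le_left).finrank_eq, Submodule.comap_inf,
    Submodule.comap_subtype_self, top_inf_eq]

theorem harmonicHomogeneous_eq_of_lt_two {n : ℕ} (hn : n < 2) :
    harmonicHomogeneous d n = homogeneousSubmodule (Fin d) ℝ n :=
  inf_eq_left.mpr fun _ hp => polyLaplacian_eq_zero_of_isHomogeneous hp hn

end Dimension

theorem finrank_harmonicHomogeneous (p M : ℕ) :
    Module.finrank ℝ (harmonicHomogeneous (p + 2) (M + 1))
      = (p + M + 1).choose (M + 1) + (p + M).choose M := by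
  cases M with
  | zero =>
    rw [harmonicHomogeneous_eq_of_lt_two (by norm_num), finrank_homogeneousSubmodule]
    simp
  | succ k =>
    have h := finrank_harmonicHomogeneous_add_finrank (d := p + 2) k
    have pascal : (p + k + 3).choose (k + 2)
        = (p + k + 1).choose k + (p + k + 1).choose (k + 1) + (p + k + 2).choose (k + 2) := by
      rw [Nat.choose_succ_succ', Nat.choose_succ_succ' (p + k + 1)]
    rw [finrank_homogeneousSubmodule, finrank_homogeneousSubmodule, Fintype.card_fin,
      show p + 2 + (k + 2) - 1 = p + k + 3 by omega, show p + 2 + k - 1 = p + k + 1 by omega,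
      pascal] at h
    change Module.finrank ℝ (harmonicHomogeneous (p + 2) (k + 2))
      = (p + k + 2).choose (k + 2) + (p + k + 1).choose (k + 1)
    omega

theorem Nat.choose_add_choose_mul_factorial_mul_factorial (p M : ℕ) :
    ((p + M + 1).choose (M + 1) + (p + M).choose M) * (p.factorial * (M + 1).factorial)
      = (2 * (M + 1) + p) * (p + M).factorial := by
  have h₁ := Nat.add_choose_mul_factorial_mul_factorial p (M + 1)
  rw [← add_assoc] at h₁
  calc ((p + M + 1).choose (M + 1) + (p + M).choose M) * (p.factorial * (M + 1).factorial)
      = (p + M + 1).choose (M + 1) * p.factorial * (M + 1).factorial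
        + (M + 1) * ((p + M).choose M * p.factorial * M.factorial) := by
        rw [Nat.factorial_succ M]; ring
    _ = (p + M + 1).factorial + (M + 1) * (p + M).factorial := by
        rw [h₁, Nat.add_choose_mul_factorial_mul_factorial]
    _ = (2 * (M + 1) + p) * (p + M).factorial := by
        rw [Nat.factorial_succ (p + M)]; ring

theorem dim_harmonic_homogeneous (p N : ℕ) (hN : 1 ≤ N) :
    Module.finrank ℝ (harmonicHomogeneous (p + 2) N)
      = (2 * N + p) * Nat.factorial (N + p - 1)
          / (Nat.factorial p * Nat.factorial N) := by
  obtain ⟨M, rfl⟩ := Nat.exists_eq_add_of_le' hN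
  rw [finrank_harmonicHomogeneous, show M + 1 + p - 1 = p + M by omega,
    ← Nat.choose_add_choose_mul_factorial_mul_factorial,
    Nat.mul_div_cancel _ (Nat.mul_pos p.factorial_pos (M + 1).factorial_pos)]
end
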